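/- Let L_{π_k}(π) = η(π_k) + Σ_s ρ_{π_k}(s) Σ_a π(a|s) A_{π_k}(s,a) and let π_{k+1} maximize L_{π_k}(π) subject to E_{s∼ρ_{π_k}}[D_TV(π_k(·|s), π(·|s))] ≤ δ_k. Then L_{π_k}(π_{k+1}) − L_{π_k}(π_k) ≥ min(1, (1−γ)δ_k) · A*_{π_k}, where A*_{π_k} = max_π (L_{π_k}(π) − L_{π_k}(π_k)) ≥ 0. -/

import Mathlib

open scoped BigOperators

def IsPolicy {S A : Type} [Fintype A] (π : S → A → ℝ) : Prop :=
  (∀ s a, 0 ≤ π s a) ∧ ∀ s, ∑ a, π s a = 1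

/-- Total variation distance between two distributions on a finite action set. -/
noncomputable def DTV {A : Type} [Fintype A] (p q : A → ℝ) : ℝ :=
  (1/2) * ∑ a, |p a - q a|

/-
The surrogate `L_{π_k}` is affine in `π`, so mixing `π_k` with a maximiser `π*` of `L_{π_k}`
with weight `β = min 1 ((1 - γ) δ)` raises it by exactly `β A*`. Since the TV distance is
at most one and the weights `ρ` have total mass `1 / (1 - γ)`, the mixture moves at most
`β / (1 - γ) ≤ δ` from `π_k` in expected TV distance, so it lies in the trust region and
`π_{k+1}` does at least as well.
-/

theorem convex_setOf_isPolicy {S A : Type} [Fintype A] :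
    Convex ℝ {π : S → A → ℝ | IsPolicy π} := by
  rintro π ⟨hπ_nonneg, hπ_sum⟩ π' ⟨hπ'_nonneg, hπ'_sum⟩ c d hc hd hcd
  refine ⟨fun s a => ?_, fun s => ?_⟩
  · simp only [Pi.add_apply, Pi.smul_apply, smul_eq_mul]
    have := hπ_nonneg s a
    have := hπ'_nonneg s a
    positivity
  · simp only [Pi.add_apply, Pi.smul_apply, smul_eq_mul, Finset.sum_add_distrib,
      ← Finset.mul_sum, hπ_sum s, hπ'_sum s]
    linarith

theorem DTV_le_one {A : Type} [Fintype A] {p q : A → ℝ}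
    (hp : ∀ a, 0 ≤ p a) (hq : ∀ a, 0 ≤ q a)
    (hp_sum : ∑ a, p a = 1) (hq_sum : ∑ a, q a = 1) : DTV p q ≤ 1 := by
  have h : ∑ a, |p a - q a| ≤ ∑ a, (p a + q a) :=
    Finset.sum_le_sum fun a _ => abs_sub_le_iff.2
      ⟨by linarith [hq a], by linarith [hp a]⟩
  rw [Finset.sum_add_distrib, hp_sum, hq_sum] at h
  unfold DTV
  linarith

theorem DTV_self_mix {A : Type} [Fintype A] (β : ℝ) (p q : A → ℝ) :
    DTV p ((1 - β) • p + β • q) = |β| * DTV p q := by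
  have h : ∀ a, |p a - ((1 - β) • p + β • q) a| = |β| * |p a - q a| := fun a => by
    rw [← abs_mul]
    simp only [Pi.add_apply, Pi.smul_apply, smul_eq_mul]
    ring_nf
  simp only [DTV, h, ← Finset.mul_sum]
  ring

theorem sum_mul_DTV_le_sum {S A : Type} [Fintype S] [Fintype A] {ρ : S → ℝ}
    (hρ : ∀ s, 0 ≤ ρ s) {π π' : S → A → ℝ} (hπ : IsPolicy π) (hπ' : IsPolicy π') :
    ∑ s, ρ s * DTV (π s) (π' s) ≤ ∑ s, ρ s :=
  Finset.sum_le_sum fun s _ => mul_le_of_le_one_right (hρ s)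
    (DTV_le_one (hπ.1 s) (hπ'.1 s) (hπ.2 s) (hπ'.2 s))

theorem sum_mul_DTV_mix_le {S A : Type} [Fintype S] [Fintype A] {ρ : S → ℝ}
    (hρ : ∀ s, 0 ≤ ρ s) {β : ℝ} (hβ : 0 ≤ β) {π π' : S → A → ℝ}
    (hπ : IsPolicy π) (hπ' : IsPolicy π') :
    ∑ s, ρ s * DTV (π s) (((1 - β) • π + β • π') s) ≤ β * ∑ s, ρ s :=
  calc ∑ s, ρ s * DTV (π s) (((1 - β) • π + β • π') s)
      = β * ∑ s, ρ s * DTV (π s) (π' s) := by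
        simp only [Pi.add_apply, Pi.smul_apply, DTV_self_mix, abs_of_nonneg hβ,
          Finset.mul_sum]
        exact Finset.sum_congr rfl fun s _ => by ring
    _ ≤ β * ∑ s, ρ s := mul_le_mul_of_nonneg_left (sum_mul_DTV_le_sum hρ hπ hπ') hβ

theorem sum_mul_sum_mix {S A : Type} [Fintype S] [Fintype A] (ρ : S → ℝ) (F : S → A → ℝ)
    (c d : ℝ) (π π' : S → A → ℝ) :
    ∑ s, ρ s * ∑ a, (c • π + d • π') s a * F s a
      = c * ∑ s, ρ s * ∑ a, π s a * F s a + d * ∑ s, ρ s * ∑ a, π' s a * F s a := by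
  simp only [Pi.add_apply, Pi.smul_apply, smul_eq_mul, add_mul, Finset.sum_add_distrib,
    mul_add, Finset.mul_sum]
  congr 1 <;> exact Finset.sum_congr rfl fun s _ => Finset.sum_congr rfl fun a _ => by ring

theorem stmt7_general {S A : Type} [Fintype S] [Fintype A]
    (γ δ ηk Astar : ℝ) (hγ : 0 < γ ∧ γ < 1) (hδ : 0 < δ)
    (ρ : S → ℝ) (hρ : ∀ s, 0 ≤ ρ s) (hρsum : ∑ s, ρ s = 1 / (1 - γ))
    (F : S → A → ℝ)
    (L : (S → A → ℝ) → ℝ)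
    (hL : ∀ π, L π = ηk + ∑ s, ρ s * ∑ a, π s a * F s a)
    (πk : S → A → ℝ) (hπk : IsPolicy πk)
    (hLπk : L πk = ηk)
    (hAstar : IsGreatest {x : ℝ | ∃ π, IsPolicy π ∧ x = L π - L πk} Astar)
    (πk1 : S → A → ℝ)
    (hmax : ∀ π, IsPolicy π → ∑ s, ρ s * DTV (πk s) (π s) ≤ δ → L π ≤ L πk1) :
    0 ≤ Astar ∧ L πk1 - L πk ≥ min 1 ((1 - γ) * δ) * Astar := by
  have h1γ : 0 < 1 - γ := by linarith [hγ.2]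
  refine ⟨hAstar.2 ⟨πk, hπk, by ring⟩, ?_⟩
  obtain ⟨πstar, hπstar, rfl⟩ := hAstar.1
  set β := min 1 ((1 - γ) * δ)
  have hβ0 : 0 ≤ β := le_min zero_le_one (by positivity)
  have hπmix : IsPolicy ((1 - β) • πk + β • πstar) :=
    convex_setOf_isPolicy hπk hπstar (by linarith [min_le_left 1 ((1 - γ) * δ)]) hβ0
      (by ring)
  have hfeas : ∑ s, ρ s * DTV (πk s) (((1 - β) • πk + β • πstar) s) ≤ δ :=
    calc ∑ s, ρ s * DTV (πk s) (((1 - β) • πk + β • πstar) s)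
        ≤ β * ∑ s, ρ s := sum_mul_DTV_mix_le hρ hβ0 hπk hπstar
      _ ≤ (1 - γ) * δ * (1 / (1 - γ)) := by
        rw [hρsum]; gcongr; exact min_le_right _ _
      _ = δ := by field_simp
  have hgain : L ((1 - β) • πk + β • πstar) - L πk = β * (L πstar - L πk) := by
    rw [hL, hL πstar, hLπk, sum_mul_sum_mix]
    have hk : ∑ s, ρ s * ∑ a, πk s a * F s a = 0 := by linarith [hL πk]
    rw [hk]
    ring
  linarith [hmax _ hπmix hfeas]

/-- Let `L_{π_k}(π) = η(π_k) + Σ_s ρ_{π_k}(s) Σ_a π(a|s) A_{π_k}(s,a)` and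
let `π_{k+1}` maximize `L_{π_k}` over the TV trust region of radius `δ_k`. Then
`L_{π_k}(π_{k+1}) − L_{π_k}(π_k) ≥ min(1, (1−γ)δ_k) · A*_{π_k}`, where
`A*_{π_k} = max_π (L_{π_k}(π) − L_{π_k}(π_k)) ≥ 0`. -/
theorem stmt7 {S A : Type} [Fintype S] [Fintype A]
    (γ δ ηk Astar : ℝ) (hγ : 0 < γ ∧ γ < 1) (hδ : 0 < δ)
    (ρ : S → ℝ) (hρ : ∀ s, 0 ≤ ρ s) (hρsum : ∑ s, ρ s = 1 / (1 - γ))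
    (F : S → A → ℝ)
    (L : (S → A → ℝ) → ℝ)
    (hL : ∀ π, L π = ηk + ∑ s, ρ s * ∑ a, π s a * F s a)
    (πk : S → A → ℝ) (hπk : IsPolicy πk)
    (hLπk : L πk = ηk)
    (hAstar : IsGreatest {x : ℝ | ∃ π, IsPolicy π ∧ x = L π - L πk} Astar)
    (πk1 : S → A → ℝ) (hπk1 : IsPolicy πk1)
    (hfeas : ∑ s, ρ s * DTV (πk s) (πk1 s) ≤ δ)
    (hmax : ∀ π, IsPolicy π → ∑ s, ρ s * DTV (πk s) (π s) ≤ δ → L π ≤ L πk1) :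
    0 ≤ Astar ∧ L πk1 - L πk ≥ min 1 ((1 - γ) * δ) * Astar :=
  stmt7_general γ δ ηk Astar hγ hδ ρ hρ hρsum F L hL πk hπk hLπk hAstar πk1 hmax
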